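/- Let p > l, γ₂ := (l+p)/(p−l), and η > 0. For y ∈ Y and z ∈ ℝ^{d1}, set y⁺(z) := P_Y(y + η∇_y f(x*(y,z), y)). Then ‖x*(z) − x*(y⁺(z),z)‖² ≤ (2(1 + ηl + ηlγ₂)/(η(p−l)))·‖y − y⁺(z)‖·D(Y). -/

import Mathlib

open Set Metric
open scoped RealInnerProductSpace

noncomputable def gradx {d1 d2 : ℕ}
    (f : EuclideanSpace ℝ (Fin d1) → EuclideanSpace ℝ (Fin d2) → ℝ)
    (x : EuclideanSpace ℝ (Fin d1)) (y : EuclideanSpace ℝ (Fin d2)) :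
    EuclideanSpace ℝ (Fin d1) :=
  gradient (fun x' => f x' y) x

noncomputable def grady {d1 d2 : ℕ}
    (f : EuclideanSpace ℝ (Fin d1) → EuclideanSpace ℝ (Fin d2) → ℝ)
    (x : EuclideanSpace ℝ (Fin d1)) (y : EuclideanSpace ℝ (Fin d2)) :
    EuclideanSpace ℝ (Fin d2) :=
  gradient (fun y' => f x y') y

/-- `f` is differentiable and `l`-smooth: the gradient is `l`-Lipschitz with respect to the
Euclidean norm on the product space (stated in squared form). -/
def IsLSmooth {d1 d2 : ℕ} (l : ℝ)
    (f : EuclideanSpace ℝ (Fin d1) → EuclideanSpace ℝ (Fin d2) → ℝ) : Prop :=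
  Differentiable ℝ (fun w : EuclideanSpace ℝ (Fin d1) × EuclideanSpace ℝ (Fin d2) => f w.1 w.2) ∧
  ∀ x₁ x₂ y₁ y₂,
    ‖gradx f x₁ y₁ - gradx f x₂ y₂‖ ^ 2 + ‖grady f x₁ y₁ - grady f x₂ y₂‖ ^ 2
      ≤ l ^ 2 * (‖x₁ - x₂‖ ^ 2 + ‖y₁ - y₂‖ ^ 2)

/-- `f̂(x, y, z) = f(x, y) + (p/2)‖x − z‖²`. -/
noncomputable def fhat {d1 d2 : ℕ}
    (f : EuclideanSpace ℝ (Fin d1) → EuclideanSpace ℝ (Fin d2) → ℝ) (p : ℝ)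
    (x : EuclideanSpace ℝ (Fin d1)) (y : EuclideanSpace ℝ (Fin d2))
    (z : EuclideanSpace ℝ (Fin d1)) : ℝ :=
  f x y + p / 2 * ‖x - z‖ ^ 2

/-!
`Φ(·, z)` is a supremum of `(p - l)`-strongly convex functions, hence `(p - l)`-strongly convex,
so the squared distance from `x̂ = x*(y⁺, z)` to the minimizer `x*(z)` is controlled by the
gap `Φ(x̂) - Φ(x*(z)) ≤ f(x̂, y*(x̂)) - f(x̂, y⁺)`, the inequality because `x̂` minimizes
`f̂(·, y⁺, z)`.
One-point concavity bounds this gap by `⟪∇_y f(x̂, y⁺), y*(x̂) - y⁺⟫`. Split the gradient into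
`∇_y f(x*(y, z), y)` plus a difference: the first part is controlled by the variational inequality
of the projection defining `y⁺`, the difference by `l`-smoothness together with the
`l / (p - l)`-Lipschitz dependence of `x*(·, z)` on `y`; each is a multiple of `‖y - y⁺‖ · D(Y)`.
-/

open Filter Topology

theorem le_of_forall_one_sub_mul_le {a c : ℝ} (h : ∀ t ∈ Ioo (0 : ℝ) 1, (1 - t) * c ≤ a) :
    c ≤ a := by
  have hlim : Tendsto (fun t : ℝ => (1 - t) * c) (𝓝[>] 0) (𝓝 c) := by
    apply tendsto_nhdsWithin_of_tendsto_nhds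
    simpa using (Continuous.tendsto (by fun_prop : Continuous fun t : ℝ => (1 - t) * c) 0)
  exact le_of_tendsto hlim (mem_of_superset (Ioo_mem_nhdsGT one_pos) h)

theorem le_mul_add_of_sq_add_sq_le {a b c d l : ℝ} (ha : 0 ≤ a) (hc : 0 ≤ c) (hd : 0 ≤ d)
    (hl : 0 ≤ l) (h : a ^ 2 + b ^ 2 ≤ l ^ 2 * (c ^ 2 + d ^ 2)) : a ≤ l * (c + d) :=
  (pow_le_pow_iff_left₀ ha (by positivity) two_ne_zero).1 (by nlinarith [mul_nonneg hc hd])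

section NormedSpace

variable {E : Type*} [NormedAddCommGroup E] [NormedSpace ℝ E] {s : Set E} {f g : E → ℝ} {m : ℝ}

theorem StrongConvexOn.half_mul_sq_norm_sub_le_of_isMinOn {x₀ x : E} (hf : StrongConvexOn s m f)
    (hmin : IsMinOn f s x₀) (hx₀ : x₀ ∈ s) (hx : x ∈ s) :
    m / 2 * ‖x - x₀‖ ^ 2 ≤ f x - f x₀ := by
  refine le_of_forall_one_sub_mul_le fun t ⟨ht₀, ht₁⟩ => ?_
  have hseg := hf.2 hx₀ hx (sub_nonneg.2 ht₁.le) ht₀.le (sub_add_cancel 1 t)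
  have hle := hmin (hf.1 hx₀ hx (sub_nonneg.2 ht₁.le) ht₀.le (sub_add_cancel 1 t))
  simp only [smul_eq_mul, mem_ofPred_eq, norm_sub_rev x₀ x] at hseg hle
  refine le_of_mul_le_mul_left ?_ ht₀
  nlinarith

theorem StrongConvexOn.mul_norm_sub_le_of_isMinOn {x₁ x₂ : E} {L : ℝ}
    (hf : StrongConvexOn s m f) (hg : StrongConvexOn s m g) (hf₁ : IsMinOn f s x₁)
    (hg₂ : IsMinOn g s x₂) (hx₁ : x₁ ∈ s) (hx₂ : x₂ ∈ s) (hL : 0 ≤ L)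
    (hfg : (f x₂ - g x₂) - (f x₁ - g x₁) ≤ L * ‖x₁ - x₂‖) :
    m * ‖x₁ - x₂‖ ≤ L := by
  have h₁ := hf.half_mul_sq_norm_sub_le_of_isMinOn hf₁ hx₁ hx₂
  have h₂ := hg.half_mul_sq_norm_sub_le_of_isMinOn hg₂ hx₂ hx₁
  rw [norm_sub_rev] at h₁
  rcases (norm_nonneg (x₁ - x₂)).eq_or_lt with h₀ | h₀
  · rw [← h₀, mul_zero]; exact hL
  · exact le_of_mul_le_mul_right (by nlinarith) h₀

theorem UniformConvexOn.ciSup {ι : Type*} [Nonempty ι] {φ : ℝ → ℝ} {F : ι → E → ℝ}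
    (hF : ∀ i, UniformConvexOn s φ (F i)) (hbdd : ∀ x ∈ s, BddAbove (range fun i => F i x)) :
    UniformConvexOn s φ fun x => ⨆ i, F i x := by
  refine ⟨(hF (Classical.arbitrary ι)).1, fun x hx y hy a b ha hb hab => ciSup_le fun i => ?_⟩
  refine ((hF i).2 hx hy ha hb hab).trans ?_
  gcongr
  · exact le_ciSup (hbdd x hx) i
  · exact le_ciSup (hbdd y hy) i

end NormedSpace

section InnerProductSpace

variable {F : Type*} [NormedAddCommGroup F] [InnerProductSpace ℝ F]

theorem real_inner_sub_le_zero_of_forall_norm_sub_le {K : Set F} (hK : Convex ℝ K) {u v w : F}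
    (hv : v ∈ K) (hmin : ∀ w ∈ K, ‖u - v‖ ≤ ‖u - w‖) (hw : w ∈ K) :
    ⟪u - v, w - v⟫ ≤ 0 := by
  have : Nonempty K := ⟨⟨v, hv⟩⟩
  refine (norm_eq_iInf_iff_real_inner_le_zero hK hv).1 ?_ w hw
  have hbdd : BddBelow (range fun w : K => ‖u - w‖) :=
    ⟨0, forall_mem_range.2 fun _ => norm_nonneg _⟩
  exact le_antisymm (le_ciInf fun w => hmin w w.2) (ciInf_le hbdd ⟨v, hv⟩)

theorem mul_inner_le_of_forall_norm_sub_le {K : Set F} (hK : Convex ℝ K) {π : F → F}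
    (hπK : ∀ v, π v ∈ K) (hπ : ∀ v, ∀ w ∈ K, ‖v - π v‖ ≤ ‖v - w‖) (η : ℝ) (y g : F) {w : F}
    (hw : w ∈ K) :
    η * ⟪g, w - π (y + η • g)⟫ ≤ ‖y - π (y + η • g)‖ * ‖w - π (y + η • g)‖ := by
  have hvi := real_inner_sub_le_zero_of_forall_norm_sub_le hK (hπK (y + η • g)) (hπ _) hw
  rw [show y + η • g - π (y + η • g) = (y - π (y + η • g)) + η • g by abel, inner_add_left,
    real_inner_smul_left] at hvi
  linarith [(neg_le_abs _).trans (abs_real_inner_le_norm (y - π (y + η • g)) (w - π (y + η • g)))]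

end InnerProductSpace

section Gradient

variable {E : Type*} [NormedAddCommGroup E] [InnerProductSpace ℝ E] [CompleteSpace E]

theorem convexOn_univ_of_inner_gradient_sub_nonneg {h : E → ℝ} {h' : E → E}
    (hh : ∀ x, HasGradientAt h (h' x) x) (hmono : ∀ x y, 0 ≤ ⟪h' x - h' y, x - y⟫) :
    ConvexOn ℝ univ h := by
  refine ⟨convex_univ, fun x _ y _ a b ha hb hab => ?_⟩
  set d := y - x
  have hline : ∀ t : ℝ, HasDerivAt (fun t : ℝ => h (x + t • d)) ⟪h' (x + t • d), d⟫ t := by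
    intro t
    have hl : HasDerivAt (fun t : ℝ => x + t • d) d t := by
      simpa using ((hasDerivAt_id t).smul_const d).const_add x
    exact (hh _).hasFDerivAt.comp_hasDerivAt t hl
  have hconv : ConvexOn ℝ univ fun t : ℝ => h (x + t • d) := by
    refine Monotone.convexOn_univ_of_deriv (fun t => (hline t).differentiableAt) fun s u hsu => ?_
    rw [(hline s).deriv, (hline u).deriv]
    rcases hsu.eq_or_lt with rfl | hsu
    · rfl
    have hsu' := hmono (x + u • d) (x + s • d)
    rw [show x + u • d - (x + s • d) = (u - s) • d by module, inner_smul_right,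
      inner_sub_left] at hsu'
    linarith [nonneg_of_mul_nonneg_right hsu' (sub_pos.2 hsu)]
  have hab' : a • x + b • y = x + (a • (0 : ℝ) + b • (1 : ℝ)) • d := by
    rw [eq_sub_of_add_eq hab]; simp only [d]; module
  simpa [hab', d] using hconv.2 (mem_univ 0) (mem_univ 1) ha hb hab

theorem hasGradientAt_add_half_mul_sq_norm {g : E → ℝ} {g' x : E} (hg : HasGradientAt g g' x)
    (c : ℝ) : HasGradientAt (fun x => g x + c / 2 * ‖x‖ ^ 2) (g' + c • x) x := by
  rw [hasGradientAt_iff_hasFDerivAt] at hg ⊢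
  refine (hg.add ((hasStrictFDerivAt_norm_sq x).hasFDerivAt.const_mul (c / 2))).congr_fderiv ?_
  ext v
  simp only [add_apply, InnerProductSpace.toDual_apply_apply, smul_apply, coe_innerSL_apply,
    nsmul_eq_mul, Nat.cast_ofNat, smul_eq_mul, map_add, map_smul, add_right_inj]
  ring

theorem convexOn_add_half_mul_sq_norm_of_lipschitz_gradient {g : E → ℝ} {g' : E → E} {l : ℝ}
    (hg : ∀ x, HasGradientAt g (g' x) x) (hlip : ∀ x y, ‖g' x - g' y‖ ≤ l * ‖x - y‖) :
    ConvexOn ℝ univ fun x => g x + l / 2 * ‖x‖ ^ 2 := by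
  refine convexOn_univ_of_inner_gradient_sub_nonneg
    (fun x => hasGradientAt_add_half_mul_sq_norm (hg x) l) fun x y => ?_
  have hcs : -⟪g' x - g' y, x - y⟫ ≤ l * ‖x - y‖ ^ 2 :=
    calc -⟪g' x - g' y, x - y⟫ ≤ ‖g' x - g' y‖ * ‖x - y‖ :=
          (neg_le_abs _).trans (abs_real_inner_le_norm _ _)
      _ ≤ l * ‖x - y‖ * ‖x - y‖ := by gcongr; exact hlip x y
      _ = l * ‖x - y‖ ^ 2 := by ring
  rw [show g' x + l • x - (g' y + l • y) = (g' x - g' y) + l • (x - y) by module, inner_add_left,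
    real_inner_smul_left, real_inner_self_eq_norm_sq]
  linarith

theorem strongConvexOn_add_half_mul_sq_norm_sub_of_lipschitz_gradient {g : E → ℝ} {g' : E → E}
    {l : ℝ} (hg : ∀ x, HasGradientAt g (g' x) x) (hlip : ∀ x y, ‖g' x - g' y‖ ≤ l * ‖x - y‖)
    (p : ℝ) (z : E) : StrongConvexOn univ (p - l) fun x => g x + p / 2 * ‖x - z‖ ^ 2 := by
  rw [strongConvexOn_iff_convex]
  refine (((convexOn_add_half_mul_sq_norm_of_lipschitz_gradient hg hlip).add
    (((-p) • (innerSL ℝ z).toLinearMap).convexOn convex_univ)).add_const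
    (p / 2 * ‖z‖ ^ 2)).congr fun x _ => ?_
  simp only [ContinuousLinearMap.toLinearMap_innerSL_apply, neg_smul, LinearMap.coe_neg,
    LinearMap.coe_smul, coe_innerₛₗ_apply, Pi.add_apply, Pi.neg_apply, Pi.smul_apply, smul_eq_mul,
    norm_sub_sq_real, real_inner_comm]
  ring

end Gradient

/-- `Φ(x, z) = max_{y ∈ Y} f̂(x, y, z)`. -/
noncomputable def fhatMax {d1 d2 : ℕ}
    (f : EuclideanSpace ℝ (Fin d1) → EuclideanSpace ℝ (Fin d2) → ℝ) (p : ℝ)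
    (Y : Set (EuclideanSpace ℝ (Fin d2))) (x z : EuclideanSpace ℝ (Fin d1)) : ℝ :=
  sSup ((fun y => fhat f p x y z) '' Y)

theorem fhatMax_le_fhat {d1 d2 : ℕ} {p : ℝ}
    {f : EuclideanSpace ℝ (Fin d1) → EuclideanSpace ℝ (Fin d2) → ℝ}
    {Y : Set (EuclideanSpace ℝ (Fin d2))} {x z : EuclideanSpace ℝ (Fin d1)} (hYne : Y.Nonempty)
    {y' : EuclideanSpace ℝ (Fin d2)} (hmax : ∀ y ∈ Y, f x y ≤ f x y') :
    fhatMax f p Y x z ≤ fhat f p x y' z :=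
  csSup_le (hYne.image _) <| by
    rintro _ ⟨y, hy, rfl⟩
    simpa [fhat] using hmax y hy

namespace IsLSmooth

variable {d1 d2 : ℕ} {l p : ℝ} {f : EuclideanSpace ℝ (Fin d1) → EuclideanSpace ℝ (Fin d2) → ℝ}

theorem norm_gradx_sub_le (hf : IsLSmooth l f) (hl : 0 ≤ l) (x₁ x₂ y₁ y₂) :
    ‖gradx f x₁ y₁ - gradx f x₂ y₂‖ ≤ l * (‖x₁ - x₂‖ + ‖y₁ - y₂‖) :=
  le_mul_add_of_sq_add_sq_le (norm_nonneg _) (norm_nonneg _) (norm_nonneg _) hl (hf.2 ..)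

theorem norm_grady_sub_le (hf : IsLSmooth l f) (hl : 0 ≤ l) (x₁ x₂ y₁ y₂) :
    ‖grady f x₁ y₁ - grady f x₂ y₂‖ ≤ l * (‖x₁ - x₂‖ + ‖y₁ - y₂‖) :=
  le_mul_add_of_sq_add_sq_le (norm_nonneg _) (norm_nonneg _) (norm_nonneg _) hl
    ((add_comm _ _).le.trans (hf.2 ..))

theorem hasGradientAt_gradx (hf : IsLSmooth l f) (x y) :
    HasGradientAt (fun x => f x y) (gradx f x y) x := by
  have h := (hf.1 (x, y)).comp x ((differentiableAt_id (𝕜 := ℝ)).prodMk (differentiableAt_const y))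
  exact h.hasGradientAt

theorem continuous_right (hf : IsLSmooth l f) (x) : Continuous (f x) :=
  hf.1.continuous.comp (continuous_const.prodMk continuous_id)

theorem strongConvexOn_fhat (hf : IsLSmooth l f) (hl : 0 ≤ l) (p : ℝ) (y z) :
    StrongConvexOn univ (p - l) fun x => fhat f p x y z :=
  strongConvexOn_add_half_mul_sq_norm_sub_of_lipschitz_gradient (hf.hasGradientAt_gradx · y)
    (fun x₁ x₂ => by simpa using hf.norm_gradx_sub_le hl x₁ x₂ y y) p z

theorem sub_sub_sub_le (hf : IsLSmooth l f) (hl : 0 ≤ l) (a b y₁ y₂) :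
    (f b y₁ - f b y₂) - (f a y₁ - f a y₂) ≤ l * ‖y₁ - y₂‖ * ‖b - a‖ := by
  have hderiv : ∀ x ∈ univ, HasFDerivWithinAt (fun x => f x y₁ - f x y₂)
      (InnerProductSpace.toDual ℝ _ (gradx f x y₁ - gradx f x y₂)) univ x := fun x _ => by
    rw [map_sub]
    exact ((hf.hasGradientAt_gradx x y₁).hasFDerivAt.sub
      (hf.hasGradientAt_gradx x y₂).hasFDerivAt).hasFDerivWithinAt
  have hbound : ∀ x ∈ univ,
      ‖InnerProductSpace.toDual ℝ _ (gradx f x y₁ - gradx f x y₂)‖ ≤ l * ‖y₁ - y₂‖ :=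
    fun x _ => by
      rw [LinearIsometryEquiv.norm_map]
      simpa using hf.norm_gradx_sub_le hl x x y₁ y₂
  exact (le_abs_self _).trans <| (Real.norm_eq_abs _).symm.le.trans <|
    convex_univ.norm_image_sub_le_of_norm_hasFDerivWithin_le hderiv hbound (mem_univ a)
      (mem_univ b)

theorem mul_norm_sub_le_of_isMinOn_fhat (hf : IsLSmooth l f) (hl : 0 ≤ l)
    {y₁ y₂ : EuclideanSpace ℝ (Fin d2)} {z x₁ x₂ : EuclideanSpace ℝ (Fin d1)}
    (h₁ : ∀ x, fhat f p x₁ y₁ z ≤ fhat f p x y₁ z) (h₂ : ∀ x, fhat f p x₂ y₂ z ≤ fhat f p x y₂ z) :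
    (p - l) * ‖x₁ - x₂‖ ≤ l * ‖y₁ - y₂‖ := by
  refine (hf.strongConvexOn_fhat hl p y₁ z).mul_norm_sub_le_of_isMinOn
    (hf.strongConvexOn_fhat hl p y₂ z) (fun x _ => h₁ x) (fun x _ => h₂ x) (mem_univ _)
    (mem_univ _) (by positivity) ?_
  have := hf.sub_sub_sub_le hl x₁ x₂ y₁ y₂
  rw [norm_sub_rev x₂] at this
  simp only [fhat]
  linarith

variable {Y : Set (EuclideanSpace ℝ (Fin d2))} {x z : EuclideanSpace ℝ (Fin d1)}

theorem bddAbove_image_fhat (hf : IsLSmooth l f) (hY : IsCompact Y) :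
    BddAbove ((fun y => fhat f p x y z) '' Y) :=
  hY.bddAbove_image ((hf.continuous_right x).add continuous_const).continuousOn

theorem fhat_le_fhatMax (hf : IsLSmooth l f) (hY : IsCompact Y) {y} (hy : y ∈ Y) :
    fhat f p x y z ≤ fhatMax f p Y x z :=
  le_csSup (hf.bddAbove_image_fhat hY) (mem_image_of_mem _ hy)

theorem strongConvexOn_fhatMax (hf : IsLSmooth l f) (hl : 0 ≤ l) (hYne : Y.Nonempty)
    (hY : IsCompact Y) : StrongConvexOn univ (p - l) fun x => fhatMax f p Y x z := by
  have : Nonempty Y := hYne.to_subtype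
  simp only [fhatMax, sSup_image']
  refine UniformConvexOn.ciSup (fun y => hf.strongConvexOn_fhat hl p y z) fun x _ => ?_
  have := hf.bddAbove_image_fhat (p := p) (x := x) (z := z) hY
  rwa [image_eq_range] at this

theorem half_mul_sq_norm_sub_le_of_isMinOn_fhatMax (hf : IsLSmooth l f) (hl : 0 ≤ l)
    (hYne : Y.Nonempty) (hY : IsCompact Y) {xb xh : EuclideanSpace ℝ (Fin d1)}
    {y₀ y₁ : EuclideanSpace ℝ (Fin d2)} (hxb : ∀ x, fhatMax f p Y xb z ≤ fhatMax f p Y x z)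
    (hxh : ∀ x, fhat f p xh y₀ z ≤ fhat f p x y₀ z) (hy₀ : y₀ ∈ Y)
    (hy₁ : ∀ y ∈ Y, f xh y ≤ f xh y₁) :
    (p - l) / 2 * ‖xh - xb‖ ^ 2 ≤ f xh y₁ - f xh y₀ :=
  calc (p - l) / 2 * ‖xh - xb‖ ^ 2 ≤ fhatMax f p Y xh z - fhatMax f p Y xb z :=
        (hf.strongConvexOn_fhatMax hl hYne hY).half_mul_sq_norm_sub_le_of_isMinOn
          (fun x _ => hxb x) (mem_univ _) (mem_univ _)
    _ ≤ fhat f p xh y₁ z - fhat f p xh y₀ z :=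
        sub_le_sub (fhatMax_le_fhat hYne hy₁) ((hxh xb).trans (hf.fhat_le_fhatMax hY hy₀))
    _ = f xh y₁ - f xh y₀ := by simp only [fhat]; ring

end IsLSmooth

theorem statement9_general {d1 d2 : ℕ} (l p η : ℝ) (hl : 0 < l) (hpl : l < p) (hη : 0 < η)
    (f : EuclideanSpace ℝ (Fin d1) → EuclideanSpace ℝ (Fin d2) → ℝ)
    (hf : IsLSmooth l f)
    -- `Y` nonempty convex compact; `projY` the nearest-point projection onto `Y`
    (Y : Set (EuclideanSpace ℝ (Fin d2))) (hYne : Y.Nonempty) (hYconv : Convex ℝ Y)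
    (hYcomp : IsCompact Y)
    (projY : EuclideanSpace ℝ (Fin d2) → EuclideanSpace ℝ (Fin d2))
    (hprojY_mem : ∀ v, projY v ∈ Y)
    (hprojY : ∀ v, ∀ w ∈ Y, ‖v - projY v‖ ≤ ‖v - w‖)
    -- one-point-concavity of `f` in `y`: `ystar x` maximizes `f(x,·)` over `Y` and
    -- `⟨∇_y f(x,y), y − y*(x)⟩ ≤ f(x,y) − f(x,y*(x))` for all `y ∈ Y`
    (ystar : EuclideanSpace ℝ (Fin d1) → EuclideanSpace ℝ (Fin d2))
    (hystar_mem : ∀ x, ystar x ∈ Y)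
    (hystar : ∀ x, ∀ y ∈ Y, f x y ≤ f x (ystar x))
    (hOPC : ∀ x, ∀ y ∈ Y, ⟪grady f x y, y - ystar x⟫ ≤ f x y - f x (ystar x))
    -- `x*(y, z)`: minimizer of `x ↦ f̂(x, y, z)`
    (xstar : EuclideanSpace ℝ (Fin d2) → EuclideanSpace ℝ (Fin d1) → EuclideanSpace ℝ (Fin d1))
    (hxstar : ∀ y z x, fhat f p (xstar y z) y z ≤ fhat f p x y z)
    -- `x*(z)`: minimizer of `x ↦ Φ(x,z) = max_{y∈Y} f̂(x,y,z)`
    (xstarz : EuclideanSpace ℝ (Fin d1) → EuclideanSpace ℝ (Fin d1))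
    (hxstarz : ∀ z x, sSup ((fun y => fhat f p (xstarz z) y z) '' Y)
        ≤ sSup ((fun y => fhat f p x y z) '' Y))
    (y : EuclideanSpace ℝ (Fin d2)) (z : EuclideanSpace ℝ (Fin d1)) :
    ‖xstarz z - xstar (projY (y + η • grady f (xstar y z) y)) z‖ ^ 2
      ≤ 2 * (1 + η * l + η * l * ((l + p) / (p - l))) / (η * (p - l))
          * ‖y - projY (y + η • grady f (xstar y z) y)‖ * diam Y := by
  set yp := projY (y + η • grady f (xstar y z) y)
  set xh := xstar yp z
  set e := ystar xh - yp
  set r := ‖y - yp‖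
  have hγ : 0 ≤ (l + p) / (p - l) := div_nonneg (by linarith) (by linarith)
  have hgap : (p - l) / 2 * ‖xstarz z - xh‖ ^ 2 ≤ ⟪grady f xh yp, e⟫ := by
    have hopc := hOPC xh yp (hprojY_mem _)
    rw [← neg_sub, inner_neg_right] at hopc
    rw [norm_sub_rev]
    linarith [hf.half_mul_sq_norm_sub_le_of_isMinOn_fhatMax hl.le hYne hYcomp (hxstarz z)
      (hxstar yp z) (hprojY_mem _) (hystar xh)]
  have he : ‖e‖ ≤ diam Y := by
    simpa [dist_eq_norm] using
      dist_le_diam_of_mem hYcomp.isBounded (hystar_mem xh) (hprojY_mem _)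
  have hx : ‖xh - xstar y z‖ ≤ (l + p) / (p - l) * r := by
    have := hf.mul_norm_sub_le_of_isMinOn_fhat hl.le (hxstar yp z) (hxstar y z)
    rw [norm_sub_rev yp] at this
    rw [div_mul_eq_mul_div, le_div_iff₀ (sub_pos.2 hpl)]
    nlinarith [norm_nonneg (y - yp)]
  have hdrift : ⟪grady f xh yp - grady f (xstar y z) y, e⟫
      ≤ l * ((l + p) / (p - l) * r + r) * diam Y := by
    refine (real_inner_le_norm _ _).trans (mul_le_mul ?_ he (norm_nonneg _)
      (mul_nonneg hl.le (by positivity)))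
    refine (hf.norm_grady_sub_le hl.le ..).trans ?_
    rw [norm_sub_rev yp]
    gcongr
  have hstep : η * ⟪grady f (xstar y z) y, e⟫ ≤ r * diam Y :=
    (mul_inner_le_of_forall_norm_sub_le hYconv hprojY_mem hprojY η y _ (hystar_mem xh)).trans
      (by gcongr)
  rw [inner_sub_left] at hdrift
  rw [div_mul_eq_mul_div, div_mul_eq_mul_div, le_div_iff₀ (mul_pos hη (sub_pos.2 hpl))]
  nlinarith [mul_le_mul_of_nonneg_left hgap hη.le, mul_le_mul_of_nonneg_left hdrift hη.le]

/-- under one-point-concavity in `y` on the compact convex `Y`, with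
`γ₂ = (l+p)/(p−l)` and `y⁺(z) = P_Y(y + η∇_y f(x*(y,z), y))`,
`‖x*(z) − x*(y⁺(z),z)‖² ≤ (2(1 + ηl + ηlγ₂)/(η(p−l)))‖y − y⁺(z)‖·D(Y)`. -/
theorem statement9 {d1 d2 : ℕ} (l p η : ℝ) (hl : 0 < l) (hpl : l < p) (hη : 0 < η)
    (f : EuclideanSpace ℝ (Fin d1) → EuclideanSpace ℝ (Fin d2) → ℝ)
    (hf : IsLSmooth l f)
    -- `Y` nonempty convex compact; `projY` the nearest-point projection onto `Y`
    (Y : Set (EuclideanSpace ℝ (Fin d2))) (hYne : Y.Nonempty) (hYconv : Convex ℝ Y)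
    (hYcomp : IsCompact Y)
    (projY : EuclideanSpace ℝ (Fin d2) → EuclideanSpace ℝ (Fin d2))
    (hprojY_mem : ∀ v, projY v ∈ Y)
    (hprojY : ∀ v, ∀ w ∈ Y, ‖v - projY v‖ ≤ ‖v - w‖)
    -- one-point-concavity of `f` in `y`: `ystar x` maximizes `f(x,·)` over `Y` and
    -- `⟨∇_y f(x,y), y − y*(x)⟩ ≤ f(x,y) − f(x,y*(x))` for all `y ∈ Y`
    (ystar : EuclideanSpace ℝ (Fin d1) → EuclideanSpace ℝ (Fin d2))
    (hystar_mem : ∀ x, ystar x ∈ Y)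
    (hystar : ∀ x, ∀ y ∈ Y, f x y ≤ f x (ystar x))
    (hOPC : ∀ x, ∀ y ∈ Y, ⟪grady f x y, y - ystar x⟫ ≤ f x y - f x (ystar x))
    -- `x*(y, z)`: minimizer of `x ↦ f̂(x, y, z)`
    (xstar : EuclideanSpace ℝ (Fin d2) → EuclideanSpace ℝ (Fin d1) → EuclideanSpace ℝ (Fin d1))
    (hxstar : ∀ y z x, fhat f p (xstar y z) y z ≤ fhat f p x y z)
    -- `x*(z)`: minimizer of `x ↦ Φ(x,z) = max_{y∈Y} f̂(x,y,z)`
    (xstarz : EuclideanSpace ℝ (Fin d1) → EuclideanSpace ℝ (Fin d1))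
    (hxstarz : ∀ z x, sSup ((fun y => fhat f p (xstarz z) y z) '' Y)
        ≤ sSup ((fun y => fhat f p x y z) '' Y))
    (y : EuclideanSpace ℝ (Fin d2)) (hy : y ∈ Y) (z : EuclideanSpace ℝ (Fin d1)) :
    ‖xstarz z - xstar (projY (y + η • grady f (xstar y z) y)) z‖ ^ 2
      ≤ 2 * (1 + η * l + η * l * ((l + p) / (p - l))) / (η * (p - l))
          * ‖y - projY (y + η • grady f (xstar y z) y)‖ * diam Y :=
  statement9_general l p η hl hpl hη f hf Y hYne hYconv hYcomp projY hprojY_mem hprojY ystar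
    hystar_mem hystar hOPC xstar hxstar xstarz hxstarz y z
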